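/- For every integrable φ : S → ℝ, the L¹-norm ‖T(t)φ − φ‖_{L¹(S)} tends to 0 as t → 0+ (strong continuity of the family {T(t)}). -/

import Mathlib

open MeasureTheory Real Filter

/-- The action of `T(t)` on the upper-line component: `T(t)φ(x,1)`. -/
noncomputable def T1 (p q' t : ℝ) (φ1 φm : ℝ → ℝ) : ℝ → ℝ := fun x =>
  if x < 0 ∨ 0 < x - t then φ1 (x - t) else p * φ1 (x - t) + q' * φm (t - x)

/-- The action of `T(t)` on the lower-line component: `T(t)φ(x,-1)`. -/
noncomputable def Tm (q p' t : ℝ) (φ1 φm : ℝ → ℝ) : ℝ → ℝ := fun x =>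
  if 0 < x ∨ x + t < 0 then φm (x + t) else q * φm (x + t) + p' * φ1 (-x - t)

/-!
Away from the interval `[0, t]` the upper component of `T(t)φ` is the translate `φ1 (· - t)`, and
on `[0, t]` it differs from that translate by `(p - 1) φ1 (x - t) + q' φm (t - x)`. Hence
`‖T(t)φ1 - φ1‖₁ ≤ ‖φ1 (· - t) - φ1‖₁ + |p - 1| ∫_{-t}^0 |φ1| + |q'| ∫_0^t |φm|`, and each term tends
to `0`: the first by continuity of translation in `L¹`, the others by continuity of the primitive.
The reflection `x ↦ -x` turns the lower component into an upper one.
-/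

open scoped Topology

theorem MeasureTheory.Integrable.tendsto_integral_norm_comp_add_sub {G E : Type*}
    [AddCommGroup G] [TopologicalSpace G] [IsTopologicalAddGroup G] [MeasurableSpace G]
    [BorelSpace G] [NormedAddCommGroup E] {μ : Measure G} [μ.IsAddLeftInvariant]
    [IsLocallyFiniteMeasure μ] [μ.InnerRegularCompactLTTop] {f : G → E} (hf : Integrable f μ) :
    Tendsto (fun t => ∫ x, ‖f (x + t) - f x‖ ∂μ) (𝓝 0) (𝓝 0) := by
  have : Fact ((1 : ENNReal) ≠ ⊤) := ⟨ENNReal.one_ne_top⟩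
  -- `DomAddAct.mk t +ᵥ F` is `F (t + ·)`, and this action of `G` on `L¹` is jointly continuous.
  have hcont : Continuous fun t : G => DomAddAct.mk t +ᵥ hf.toL1 f :=
    DomAddAct.continuous_mk.vadd continuous_const
  have hlim := hcont.tendsto 0
  rw [tendsto_iff_norm_sub_tendsto_zero, DomAddAct.mk_zero, zero_vadd] at hlim
  refine hlim.congr fun t => ?_
  rw [L1.norm_eq_integral_norm]
  refine integral_congr_ae ?_
  have hshift : (fun x => hf.toL1 f (t + x)) =ᵐ[μ] fun x => f (t + x) :=
    (measurePreserving_add_left μ t).quasiMeasurePreserving.ae_eq_comp hf.coeFn_toL1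
  filter_upwards [Lp.coeFn_sub (DomAddAct.mk t +ᵥ hf.toL1 f) (hf.toL1 f),
    DomAddAct.vadd_Lp_ae_eq (DomAddAct.mk t) (hf.toL1 f), hf.coeFn_toL1, hshift]
    with x hsub hvadd hcoe hcoe_shift
  rw [hsub, Pi.sub_apply, hvadd, hcoe, Equiv.symm_apply_apply, vadd_eq_add, hcoe_shift, add_comm]

lemma abs_T1_sub_le (p q' t : ℝ) (φ1 φm : ℝ → ℝ) (x : ℝ) :
    |T1 p q' t φ1 φm x - φ1 x| ≤ |φ1 (x - t) - φ1 x| +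
      (Set.Icc 0 t).indicator (fun x => |p - 1| * |φ1 (x - t)| + |q'| * |φm (t - x)|) x := by
  unfold T1
  split_ifs with h
  · have hx : x ∉ Set.Icc 0 t := fun hx => by rcases h with h | h <;> linarith [hx.1, hx.2]
    simp [Set.indicator_of_notMem hx]
  · rw [not_or, not_lt, not_lt] at h
    rw [Set.indicator_of_mem (Set.mem_Icc.2 ⟨h.1, by linarith [h.2]⟩), ← abs_mul, ← abs_mul]
    calc |p * φ1 (x - t) + q' * φm (t - x) - φ1 x|
        = |(φ1 (x - t) - φ1 x) + ((p - 1) * φ1 (x - t) + q' * φm (t - x))| := by ring_nf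
      _ ≤ |φ1 (x - t) - φ1 x| + (|(p - 1) * φ1 (x - t)| + |q' * φm (t - x)|) :=
          (abs_add_le _ _).trans (add_le_add_right (abs_add_le _ _) _)

lemma integral_abs_T1_sub_le (p q' : ℝ) {t : ℝ} (ht : 0 ≤ t) {φ1 φm : ℝ → ℝ}
    (h1 : Integrable φ1) (hm : Integrable φm) :
    ∫ x, |T1 p q' t φ1 φm x - φ1 x| ≤ (∫ x, |φ1 (x - t) - φ1 x|) +
      (|p - 1| * (∫ x in -t..0, |φ1 x|) + |q'| * ∫ x in 0..t, |φm x|) := by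
  have hφ1 : Integrable fun x => |φ1 (x - t)| := (h1.comp_sub_right t).abs
  have hφm : Integrable fun x => |φm (t - x)| := (hm.comp_sub_left t).abs
  have hjump : Integrable ((Set.Icc 0 t).indicator
      fun x => |p - 1| * |φ1 (x - t)| + |q'| * |φm (t - x)|) :=
    ((hφ1.const_mul _).add (hφm.const_mul _)).indicator measurableSet_Icc
  have htrans : Integrable fun x => |φ1 (x - t) - φ1 x| := ((h1.comp_sub_right t).sub h1).abs
  calc ∫ x, |T1 p q' t φ1 φm x - φ1 x|
      ≤ ∫ x, (|φ1 (x - t) - φ1 x| + (Set.Icc 0 t).indicator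
          (fun x => |p - 1| * |φ1 (x - t)| + |q'| * |φm (t - x)|) x) :=
        integral_mono_of_nonneg (.of_forall fun _ => abs_nonneg _) (htrans.add hjump)
          (.of_forall (abs_T1_sub_le p q' t φ1 φm))
    _ = (∫ x, |φ1 (x - t) - φ1 x|) +
          ∫ x in 0..t, (|p - 1| * |φ1 (x - t)| + |q'| * |φm (t - x)|) := by
        rw [integral_add htrans hjump, integral_indicator measurableSet_Icc,
          integral_Icc_eq_integral_Ioc, ← intervalIntegral.integral_of_le ht]
    _ = _ := by
        rw [intervalIntegral.integral_add (hφ1.const_mul _).intervalIntegrable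
          (hφm.const_mul _).intervalIntegrable, intervalIntegral.integral_const_mul,
          intervalIntegral.integral_const_mul,
          intervalIntegral.integral_comp_sub_right (fun x => |φ1 x|),
          intervalIntegral.integral_comp_sub_left (fun x => |φm x|)]
        simp

lemma tendsto_integral_abs_T1_sub (p q' : ℝ) {φ1 φm : ℝ → ℝ}
    (h1 : Integrable φ1) (hm : Integrable φm) :
    Tendsto (fun t => ∫ x, |T1 p q' t φ1 φm x - φ1 x|) (𝓝[>] 0) (𝓝 0) := by
  have htrans : Tendsto (fun t => ∫ x, |φ1 (x - t) - φ1 x|) (𝓝 0) (𝓝 0) := by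
    simpa [Function.comp_def, sub_eq_add_neg, Real.norm_eq_abs] using
      (h1.tendsto_integral_norm_comp_add_sub (μ := volume)).comp
        (continuous_neg.tendsto' 0 0 neg_zero)
  have hprim : ∀ {g : ℝ → ℝ}, Integrable g → Continuous fun t => ∫ x in 0..t, g x :=
    fun hg => intervalIntegral.continuous_primitive (fun _ _ => hg.intervalIntegrable) 0
  have hleft : Tendsto (fun t => ∫ x in -t..0, |φ1 x|) (𝓝 0) (𝓝 0) := by
    have h : Continuous fun t => -∫ x in 0..-t, |φ1 x| :=
      ((hprim h1.abs).comp continuous_neg).neg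
    exact (h.tendsto' 0 0 (by simp)).congr fun t => (intervalIntegral.integral_symm _ _).symm
  have hright : Tendsto (fun t => ∫ x in 0..t, |φm x|) (𝓝 0) (𝓝 0) := by
    simpa using (hprim hm.abs).tendsto 0
  refine squeeze_zero' (.of_forall fun _ => integral_nonneg fun _ => abs_nonneg _)
    (eventually_nhdsWithin_of_forall fun _ ht => integral_abs_T1_sub_le p q' ht.le h1 hm) ?_
  simpa using (htrans.add ((hleft.const_mul _).add (hright.const_mul _))).mono_left
    nhdsWithin_le_nhds

lemma Tm_eq_T1_neg (q p' t : ℝ) (φ1 φm : ℝ → ℝ) (x : ℝ) :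
    Tm q p' t φ1 φm x = T1 q p' t (fun y => φm (-y)) (fun y => φ1 (-y)) (-x) := by
  have hcond : (-x < 0 ∨ 0 < -x - t) ↔ (0 < x ∨ x + t < 0) := by
    constructor <;> rintro (h | h) <;> [left; right; left; right] <;> linarith
  simp only [Tm, T1, hcond, neg_sub, sub_neg_eq_add, add_comm t, neg_add_rev, neg_add_eq_sub]

theorem stmt2 (p p' q q' : ℝ)
    (φ1 φm : ℝ → ℝ) (h1 : Integrable φ1) (hm : Integrable φm) :
    Tendsto (fun t : ℝ =>
        (∫ x, |T1 p q' t φ1 φm x - φ1 x|) + ∫ x, |Tm q p' t φ1 φm x - φm x|)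
      (nhdsWithin 0 (Set.Ioi 0)) (nhds 0) := by
  have hTm : ∀ t, ∫ x, |Tm q p' t φ1 φm x - φm x| =
      ∫ x, |T1 q p' t (fun y => φm (-y)) (fun y => φ1 (-y)) x - φm (-x)| := fun t => by
    rw [← integral_neg_eq_self]
    simp only [Tm_eq_T1_neg, neg_neg]
  simpa [hTm] using (tendsto_integral_abs_T1_sub p q' h1 hm).add
    (tendsto_integral_abs_T1_sub q p' hm.comp_neg h1.comp_neg)
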